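/- arXiv:2306.15597 — 6 statements merged into one kernel-verified Lean document; each statement's English description precedes it below -/
import Mathlib

section
/- Greedy testing of the K jobs with largest upper processing times is 2-competitive for oblivious makespan minimization: let J be a finite job set with 0 ≤ p^∨(j) ≤ p^∧(j) for all j, let S be a set of K jobs with the largest values of p^∧, and let S* be any subset with |S*| ≤ K. Then ∑_{j∈S} p^∨(j) + ∑_{j∉S} p^∧(j) ≤ 2 · (∑_{j∈S*} p^∨(j) + ∑_{j∉S*} p^∧(j)). -/
/-- If every value on `T` is at most every value on `U`, values on `U` are
nonnegative, and `T.card ≤ U.card`, then the sum over `T` is at most the sum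
over `U`. -/
lemma sum_le_sum_of_dominated {J : Type*} [DecidableEq J] (f : J → ℝ)
    (T U : Finset J) (hc : T.card ≤ U.card)
    (hnn : ∀ b ∈ U, 0 ≤ f b)
    (h : ∀ a ∈ T, ∀ b ∈ U, f a ≤ f b) :
    ∑ a ∈ T, f a ≤ ∑ b ∈ U, f b := by
  rcases U.eq_empty_or_nonempty with hU | hU
  · subst hU
    simp only [Finset.card_empty, Nat.le_zero, Finset.card_eq_zero] at hc
    simp [hc]
  · obtain ⟨b₀, hb₀, hmin⟩ := U.exists_min_image f hU
    calc ∑ a ∈ T, f a ≤ T.card • f b₀ :=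
          Finset.sum_le_card_nsmul T f (f b₀) (fun a ha => h a ha b₀ hb₀)
      _ ≤ U.card • f b₀ := by
          simp only [nsmul_eq_mul]
          exact mul_le_mul_of_nonneg_right (by exact_mod_cast hc) (hnn b₀ hb₀)
      _ ≤ ∑ b ∈ U, f b := Finset.card_nsmul_le_sum U f (f b₀) hmin

/-- Greedy testing of the `K` jobs with largest upper processing times is
`2`-competitive for oblivious makespan minimization. -/
theorem greedy_topK_two_competitive_makespan
    {J : Type*} [Fintype J] [DecidableEq J]
    (pUp pLow : J → ℝ) (hLow : ∀ j, 0 ≤ pLow j) (hle : ∀ j, pLow j ≤ pUp j)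
    (K : ℕ) (S : Finset J) (hcard : S.card = K)
    (htop : ∀ j ∈ S, ∀ j' ∉ S, pUp j' ≤ pUp j)
    (Sstar : Finset J) (hstar : Sstar.card ≤ K) :
    ∑ j ∈ S, pLow j + ∑ j ∈ Sᶜ, pUp j
      ≤ 2 * (∑ j ∈ Sstar, pLow j + ∑ j ∈ Sstarᶜ, pUp j) := by
  have hUpnn : ∀ j, 0 ≤ pUp j := fun j => (hLow j).trans (hle j)
  -- Decompositions
  have h1 : ∑ j ∈ S, pLow j
      = ∑ j ∈ S ∩ Sstar, pLow j + ∑ j ∈ S \ Sstar, pLow j :=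
    (Finset.sum_inter_add_sum_sdiff S Sstar pLow).symm
  have hSc : Sᶜ ∩ Sstar = Sstar \ S := by ext x; simp [Finset.mem_sdiff, and_comm]
  have hSc2 : Sᶜ \ Sstar = Sstarᶜ \ S := by
    ext x; simp [Finset.mem_sdiff, and_comm]
  have h2 : ∑ j ∈ Sᶜ, pUp j
      = ∑ j ∈ Sstar \ S, pUp j + ∑ j ∈ Sstarᶜ \ S, pUp j := by
    rw [← hSc, ← hSc2]; exact (Finset.sum_inter_add_sum_sdiff Sᶜ Sstar pUp).symm
  have h3 : ∑ j ∈ Sstar, pLow j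
      = ∑ j ∈ Sstar ∩ S, pLow j + ∑ j ∈ Sstar \ S, pLow j :=
    (Finset.sum_inter_add_sum_sdiff Sstar S pLow).symm
  have hSc3 : Sstarᶜ ∩ S = S \ Sstar := by ext x; simp [Finset.mem_sdiff, and_comm]
  have hSc4 : Sstarᶜ \ S = Sstarᶜ \ S := rfl
  have h4 : ∑ j ∈ Sstarᶜ, pUp j
      = ∑ j ∈ S \ Sstar, pUp j + ∑ j ∈ Sstarᶜ \ S, pUp j := by
    rw [← hSc3]; exact (Finset.sum_inter_add_sum_sdiff Sstarᶜ S pUp).symm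
  have hinter : Sstar ∩ S = S ∩ Sstar := Finset.inter_comm _ _
  -- Cardinality comparison
  have hcards : (Sstar \ S).card ≤ (S \ Sstar).card := by
    have e1 : (Sstar \ S).card + (Sstar ∩ S).card = Sstar.card :=
      Finset.card_sdiff_add_card_inter Sstar S
    have e2 : (S \ Sstar).card + (S ∩ Sstar).card = S.card :=
      Finset.card_sdiff_add_card_inter S Sstar
    have e3 : (Sstar ∩ S).card = (S ∩ Sstar).card := by rw [hinter]
    have : Sstar.card ≤ S.card := by omega
    omega
  -- Key inequality
  have hkey : ∑ j ∈ Sstar \ S, pUp j ≤ ∑ j ∈ S \ Sstar, pUp j := by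
    apply sum_le_sum_of_dominated pUp _ _ hcards (fun b _ => hUpnn b)
    intro a ha b hb
    exact htop b (Finset.mem_sdiff.mp hb).1 a (Finset.mem_sdiff.mp ha).2
  have hB : ∑ j ∈ S \ Sstar, pLow j ≤ ∑ j ∈ S \ Sstar, pUp j :=
    Finset.sum_le_sum (fun j _ => hle j)
  have hA : 0 ≤ ∑ j ∈ S ∩ Sstar, pLow j :=
    Finset.sum_nonneg (fun j _ => hLow j)
  have hB' : 0 ≤ ∑ j ∈ Sstar \ S, pLow j :=
    Finset.sum_nonneg (fun j _ => hLow j)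
  have hD : 0 ≤ ∑ j ∈ Sstarᶜ \ S, pUp j :=
    Finset.sum_nonneg (fun j _ => hUpnn j)
  rw [h1, h2, h3, h4, hinter]
  linarith
end

section
/- Lower bound of 2 for oblivious makespan: for every even n and every subset S ⊆ {1,…,n} with |S| ≤ n/2, if p^∧(j) = 1 for all j, p^∨(j) = 1 for j ∈ S and p^∨(j) = 0 for j ∉ S, then the makespan of testing S equals n while there exists a feasible testing set (namely the n/2 jobs outside S) achieving makespan at most n/2; hence the ratio of the algorithm's makespan to the optimum is at least 2. -/
/-- Lower bound of 2 for oblivious makespan minimization: with all upper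
times 1, lower time 1 on the tested set `S` and 0 elsewhere, testing `S`
yields makespan `n`, while some budget-feasible set achieves makespan
at most `n/2`. -/
theorem oblivious_makespan_lower_bound_two
    (n : ℕ) (hn : Even n) (S : Finset (Fin n)) (hS : 2 * S.card ≤ n)
    (pUp pLow : Fin n → ℝ)
    (hUp : ∀ j, pUp j = 1)
    (hLow : ∀ j, pLow j = if j ∈ S then 1 else 0) :
    (∑ j ∈ S, pLow j + ∑ j ∈ Sᶜ, pUp j = (n : ℝ))
    ∧ ∃ T : Finset (Fin n), 2 * T.card ≤ n ∧
        ∑ j ∈ T, pLow j + ∑ j ∈ Tᶜ, pUp j ≤ (n : ℝ) / 2 := by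
  have hcard : Sᶜ.card = n - S.card := by
    simp [Finset.card_compl]
  constructor
  · have h1 : ∑ j ∈ S, pLow j = (S.card : ℝ) := by
      rw [Finset.sum_congr rfl (fun j hj => by rw [hLow j, if_pos hj])]
      simp
    have h2 : ∑ j ∈ Sᶜ, pUp j = ((n - S.card : ℕ) : ℝ) := by
      rw [Finset.sum_congr rfl (fun j _ => hUp j)]
      simp [hcard]
    rw [h1, h2, Nat.cast_sub (by omega)]
    ring
  · have hle : n / 2 ≤ Sᶜ.card := by omega
    obtain ⟨T, hTsub, hTcard⟩ := Finset.exists_subset_card_eq hle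
    refine ⟨T, by omega, ?_⟩
    have h1 : ∑ j ∈ T, pLow j = 0 := by
      apply Finset.sum_eq_zero
      intro j hj
      rw [hLow j, if_neg (Finset.mem_compl.mp (hTsub hj))]
    have h2 : ∑ j ∈ Tᶜ, pUp j = ((n - T.card : ℕ) : ℝ) := by
      rw [Finset.sum_congr rfl (fun j _ => hUp j)]
      simp [Finset.card_compl]
    rw [h1, h2, hTcard, zero_add]
    have : ((n - n / 2 : ℕ) : ℝ) = (n : ℝ) - ((n / 2 : ℕ) : ℝ) := by
      rw [Nat.cast_sub (by omega)]
    rw [this]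
    obtain ⟨k, hk⟩ := hn
    subst hk
    have : (k + k) / 2 = k := by omega
    rw [this]
    push_cast
    ring_nf
    linarith
end

section
/- Lower bound of 4 for oblivious total completion time: for every even n and every subset S ⊆ {1,…,n} with |S| ≤ n/2, set p^∧(j) = 1 for all j, p^∨(j) = 1 for j ∈ S and p^∨(j) = 0 otherwise. Then every schedule that tests exactly the set S has total completion time n(n+1)/2, while testing the n/2 jobs outside S yields total completion time n/2·(n/2+1)/2 = n(n+2)/8; consequently the competitive ratio is at least 4(n+1)/(n+2), which tends to 4 as n → ∞. -/
/-! Testing only the jobs of `S` reveals nothing useful: every job then takes time 1, whatever the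
order, so the cost is `1 + 2 + ⋯ + n`. Testing `n/2` jobs outside `S` instead makes them free, and
scheduling them first leaves `n/2` unit jobs costing `1 + 2 + ⋯ + n/2`. -/

open Finset

lemma sum_Ico_natCast_sub {k n : ℕ} (hkn : k ≤ n) :
    ∑ i ∈ Ico k n, ((n : ℝ) - i) = (n - k) * (n - k + 1) / 2 := by
  induction n, hkn using Nat.le_induction with
  | base => simp
  | succ n hkn ih =>
    have hshift : ∀ i ∈ Ico k n, ((n + 1 : ℕ) : ℝ) - i = ((n : ℝ) - i) + 1 := by
      intro i _; push_cast; ring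
    rw [sum_Ico_succ_top hkn, sum_congr rfl hshift, sum_add_distrib, ih, sum_const,
      Nat.card_Ico, nsmul_eq_mul, Nat.cast_sub hkn]
    push_cast
    ring

lemma Fin.sum_natCast_sub (n : ℕ) : ∑ i : Fin n, ((n : ℝ) - i) = n * (n + 1) / 2 := by
  rw [Fin.sum_univ_eq_sum_range (fun i => (n : ℝ) - i), range_eq_Ico,
    sum_Ico_natCast_sub n.zero_le]
  simp

lemma Fin.sum_ite_val_lt_natCast_sub {k n : ℕ} (hkn : k ≤ n) :
    ∑ i : Fin n, (if (i : ℕ) < k then 0 else (n : ℝ) - i) = (n - k) * (n - k + 1) / 2 := by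
  have hfilter : {i ∈ range n | ¬i < k} = Ico k n := by ext; simp; omega
  rw [Fin.sum_univ_eq_sum_range (fun i => if i < k then 0 else (n : ℝ) - i), sum_ite,
    sum_const_zero, zero_add, hfilter, sum_Ico_natCast_sub hkn]

/-- Job `σ i` is processed in (0-indexed) position `i`, so its time `p (σ i)` enters the
completion times of the `n - i` jobs from position `i` on. -/
def totalCompletionTime {n : ℕ} (σ : Equiv.Perm (Fin n)) (p : Fin n → ℝ) : ℝ :=
  ∑ i : Fin n, ((n : ℝ) - i) * p (σ i)

def realizedTime {α : Type*} [DecidableEq α] (T : Finset α) (pUp pLow : α → ℝ) (j : α) : ℝ :=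
  if j ∈ T then pLow j else pUp j

lemma totalCompletionTime_of_forall_eq_one {n : ℕ} (σ : Equiv.Perm (Fin n)) {p : Fin n → ℝ}
    (hp : ∀ j, p j = 1) : totalCompletionTime σ p = n * (n + 1) / 2 := by
  simp only [totalCompletionTime, hp, mul_one, Fin.sum_natCast_sub]

lemma totalCompletionTime_of_zero_first {n k : ℕ} (hkn : k ≤ n) {σ : Equiv.Perm (Fin n)}
    {p : Fin n → ℝ} (hp : ∀ i : Fin n, p (σ i) = if (i : ℕ) < k then 0 else 1) :
    totalCompletionTime σ p = (n - k) * (n - k + 1) / 2 := by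
  rw [← Fin.sum_ite_val_lt_natCast_sub hkn, totalCompletionTime]
  refine sum_congr rfl fun i _ => ?_
  rw [hp]
  split_ifs <;> simp

lemma Fin.exists_perm_mem_iff_val_lt_card {n : ℕ} (T : Finset (Fin n)) :
    ∃ σ : Equiv.Perm (Fin n), ∀ i, σ i ∈ T ↔ (i : ℕ) < #T := by
  have hcard : #{i : Fin n | (i : ℕ) < #T} = #T := by
    rw [Fin.card_filter_val_lt, min_eq_right (by simpa using card_le_univ T)]
  obtain ⟨σ, hσ⟩ := Equiv.Perm.exists_map_finset_eq _ T hcard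
  refine ⟨σ, fun i => ?_⟩
  have hmem := mem_map' σ.toEmbedding (a := i) (s := {i : Fin n | (i : ℕ) < #T})
  rw [hσ] at hmem
  simpa using hmem

theorem oblivious_total_completion_lower_bound_four_general
    (n : ℕ) (hn : Even n)
    (S : Finset (Fin n)) (hS : 2 * S.card ≤ n)
    (pUp pLow : Fin n → ℝ)
    (hUp : ∀ j, pUp j = 1)
    (hLow : ∀ j, pLow j = if j ∈ S then 1 else 0) :
    (∀ σ : Equiv.Perm (Fin n),
        ∑ i : Fin n, ((n : ℝ) - ((i : ℕ) : ℝ)) *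
            (if σ i ∈ S then pLow (σ i) else pUp (σ i))
          = (n : ℝ) * (n + 1) / 2)
    ∧ (∃ T : Finset (Fin n), T ⊆ Sᶜ ∧ 2 * T.card = n ∧
        ∃ σ : Equiv.Perm (Fin n),
          ∑ i : Fin n, ((n : ℝ) - ((i : ℕ) : ℝ)) *
              (if σ i ∈ T then pLow (σ i) else pUp (σ i))
            = (n : ℝ) * (n + 2) / 8)
    ∧ (n : ℝ) * (n + 1) / 2
        = (4 * ((n : ℝ) + 1) / ((n : ℝ) + 2)) * ((n : ℝ) * (n + 2) / 8) := by
  obtain ⟨m, rfl⟩ := hn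
  refine ⟨fun σ => totalCompletionTime_of_forall_eq_one (p := realizedTime S pUp pLow) σ
    fun j => ?_, ?_, ?_⟩
  · by_cases hj : j ∈ S <;> simp [realizedTime, hj, hLow, hUp]
  · have hcompl : m ≤ #Sᶜ := by rw [card_compl, Fintype.card_fin]; omega
    obtain ⟨T, hTS, hT⟩ := exists_subset_card_eq hcompl
    obtain ⟨σ, hσ⟩ := Fin.exists_perm_mem_iff_val_lt_card T
    rw [hT] at hσ
    refine ⟨T, hTS, by omega, σ, ?_⟩
    change totalCompletionTime σ (realizedTime T pUp pLow) = _
    rw [totalCompletionTime_of_zero_first (k := m) (by omega) fun i => ?_]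
    · push_cast; ring
    · by_cases hi : (i : ℕ) < m
      · have hσT : σ i ∈ T := (hσ i).2 hi
        simp [realizedTime, hσT, hi, hLow, mem_compl.1 (hTS hσT)]
      · have hσT : σ i ∉ T := fun h => hi ((hσ i).1 h)
        simp [realizedTime, hσT, hi, hUp]
  · field_simp
    ring

/-- Lower bound of 4 for oblivious total completion time: with all upper
times 1, lower time 1 on `S` and 0 elsewhere, every schedule testing `S`
has total completion time `n(n+1)/2`, while testing `n/2` jobs outside `S`
achieves `n(n+2)/8`; the ratio is `4(n+1)/(n+2)`.
Here `σ i` is the job at 0-indexed position `i`, contributing with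
multiplier `n − i`. -/
theorem oblivious_total_completion_lower_bound_four
    (n : ℕ) (hpos : 0 < n) (hn : Even n)
    (S : Finset (Fin n)) (hS : 2 * S.card ≤ n)
    (pUp pLow : Fin n → ℝ)
    (hUp : ∀ j, pUp j = 1)
    (hLow : ∀ j, pLow j = if j ∈ S then 1 else 0) :
    (∀ σ : Equiv.Perm (Fin n),
        ∑ i : Fin n, ((n : ℝ) - ((i : ℕ) : ℝ)) *
            (if σ i ∈ S then pLow (σ i) else pUp (σ i))
          = (n : ℝ) * (n + 1) / 2)
    ∧ (∃ T : Finset (Fin n), T ⊆ Sᶜ ∧ 2 * T.card = n ∧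
        ∃ σ : Equiv.Perm (Fin n),
          ∑ i : Fin n, ((n : ℝ) - ((i : ℕ) : ℝ)) *
              (if σ i ∈ T then pLow (σ i) else pUp (σ i))
            = (n : ℝ) * (n + 2) / 8)
    ∧ (n : ℝ) * (n + 1) / 2
        = (4 * ((n : ℝ) + 1) / ((n : ℝ) + 2)) * ((n : ℝ) * (n + 2) / 8) :=
  oblivious_total_completion_lower_bound_four_general n hn S hS pUp pLow hUp hLow
end

section
/- Interleaving bound: let a_1 ≥ a_2 ≥ … ≥ a_m ≥ 0 and b_1 ≥ b_2 ≥ … ≥ b_k ≥ 0 be nonincreasing sequences of nonnegative reals. Then the minimum total completion time over all orderings of the merged multiset {a_1,…,a_m, b_1,…,b_k} is at most 2·∑_{i=1}^m (m−i+1)·a_i + 2·∑_{i=1}^k (k−i+1)·b_i, i.e., at most twice the sum of the optimal total completion times of the two sequences scheduled separately. -/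
private theorem interleave_helper (m k : ℕ) (hk : k ≤ m) (a : Fin m → ℝ) (b : Fin k → ℝ)
    (ha0 : ∀ i, 0 ≤ a i) (hb0 : ∀ i, 0 ≤ b i) :
    ∃ σ : (Fin m ⊕ Fin k) ≃ Fin (m + k),
      ∑ j : Fin m ⊕ Fin k,
          (((m + k : ℕ) : ℝ) - ((σ j : ℕ) : ℝ)) * Sum.elim a b j
        ≤ 2 * ∑ i : Fin m, ((m : ℝ) - ((i : ℕ) : ℝ)) * a i
          + 2 * ∑ i : Fin k, ((k : ℝ) - ((i : ℕ) : ℝ)) * b i := by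
  set f : Fin m ⊕ Fin k → Fin (m + k) := fun j =>
    match j with
    | .inl i => if (i : ℕ) < m - k then ⟨i, by have := i.isLt; omega⟩
        else ⟨2 * i - (m - k), by have := i.isLt; omega⟩
    | .inr i => ⟨(m - k) + 2 * i + 1, by have := i.isLt; omega⟩ with hf
  have hfl : ∀ i : Fin m, ((f (Sum.inl i) : ℕ))
      = if (i : ℕ) < m - k then (i : ℕ) else 2 * (i : ℕ) - (m - k) := by
    intro i; by_cases h : (i : ℕ) < m - k <;> simp [hf, h]
  have hfr : ∀ i : Fin k, ((f (Sum.inr i) : ℕ)) = (m - k) + 2 * (i : ℕ) + 1 := by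
    intro i; simp [hf]
  have hinj : Function.Injective f := by
    intro x y hxy
    have hv : (f x).val = (f y).val := congrArg Fin.val hxy
    cases x with
    | inl i =>
      cases y with
      | inl j =>
        rw [hfl, hfl] at hv
        have hi := i.isLt; have hj := j.isLt
        split_ifs at hv <;> exact congrArg Sum.inl (Fin.ext (by omega))
      | inr j =>
        rw [hfl, hfr] at hv
        have hi := i.isLt; have hj := j.isLt
        split_ifs at hv <;> omega
    | inr i =>
      cases y with
      | inl j =>
        rw [hfr, hfl] at hv
        have hi := i.isLt; have hj := j.isLt
        split_ifs at hv <;> omega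
      | inr j =>
        rw [hfr, hfr] at hv
        exact congrArg Sum.inr (Fin.ext (by omega))
  have hbij : Function.Bijective f :=
    (Fintype.bijective_iff_injective_and_card f).mpr ⟨hinj, by simp⟩
  refine ⟨Equiv.ofBijective f hbij, ?_⟩
  have hcoe : ∀ j, (Equiv.ofBijective f hbij) j = f j := fun j => rfl
  have h1 : ∀ i : Fin m,
      (((m + k : ℕ) : ℝ) - (((Equiv.ofBijective f hbij) (Sum.inl i) : ℕ) : ℝ)) * a i
        ≤ 2 * (((m : ℝ) - ((i : ℕ) : ℝ)) * a i) := by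
    intro i
    have hi := i.isLt
    have hnat : 2 * (i : ℕ) + k ≤ m + ((f (Sum.inl i) : ℕ)) := by
      rw [hfl]; split_ifs <;> omega
    have hR : (((2 * (i : ℕ) + k : ℕ) : ℝ)) ≤ ((m + ((f (Sum.inl i)) : ℕ) : ℕ) : ℝ) :=
      Nat.cast_le.mpr hnat
    rw [hcoe]
    have hc : ((m + k : ℕ) : ℝ) - (((f (Sum.inl i)) : ℕ) : ℝ) ≤ 2 * ((m : ℝ) - ((i : ℕ) : ℝ)) := by
      push_cast at hR ⊢; linarith
    calc (((m + k : ℕ) : ℝ) - (((f (Sum.inl i)) : ℕ) : ℝ)) * a i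
        ≤ (2 * ((m : ℝ) - ((i : ℕ) : ℝ))) * a i := mul_le_mul_of_nonneg_right hc (ha0 i)
      _ = 2 * (((m : ℝ) - ((i : ℕ) : ℝ)) * a i) := by ring
  have h2 : ∀ i : Fin k,
      (((m + k : ℕ) : ℝ) - (((Equiv.ofBijective f hbij) (Sum.inr i) : ℕ) : ℝ)) * b i
        ≤ 2 * (((k : ℝ) - ((i : ℕ) : ℝ)) * b i) := by
    intro i
    have hi := i.isLt
    have hnat : 2 * (i : ℕ) + m ≤ k + ((f (Sum.inr i) : ℕ)) := by
      rw [hfr]; omega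
    have hR : (((2 * (i : ℕ) + m : ℕ) : ℝ)) ≤ ((k + ((f (Sum.inr i)) : ℕ) : ℕ) : ℝ) :=
      Nat.cast_le.mpr hnat
    rw [hcoe]
    have hc : ((m + k : ℕ) : ℝ) - (((f (Sum.inr i)) : ℕ) : ℝ) ≤ 2 * ((k : ℝ) - ((i : ℕ) : ℝ)) := by
      push_cast at hR ⊢; linarith
    calc (((m + k : ℕ) : ℝ) - (((f (Sum.inr i)) : ℕ) : ℝ)) * b i
        ≤ (2 * ((k : ℝ) - ((i : ℕ) : ℝ))) * b i := mul_le_mul_of_nonneg_right hc (hb0 i)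
      _ = 2 * (((k : ℝ) - ((i : ℕ) : ℝ)) * b i) := by ring
  rw [Fintype.sum_sum_type]
  calc (∑ i : Fin m, (((m + k : ℕ) : ℝ) - (((Equiv.ofBijective f hbij) (Sum.inl i) : ℕ) : ℝ)) * Sum.elim a b (Sum.inl i))
        + ∑ i : Fin k, (((m + k : ℕ) : ℝ) - (((Equiv.ofBijective f hbij) (Sum.inr i) : ℕ) : ℝ)) * Sum.elim a b (Sum.inr i)
      ≤ (∑ i : Fin m, 2 * (((m : ℝ) - ((i : ℕ) : ℝ)) * a i))
        + ∑ i : Fin k, 2 * (((k : ℝ) - ((i : ℕ) : ℝ)) * b i) :=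
        add_le_add (Finset.sum_le_sum fun i _ => h1 i) (Finset.sum_le_sum fun i _ => h2 i)
    _ = 2 * ∑ i : Fin m, ((m : ℝ) - ((i : ℕ) : ℝ)) * a i
        + 2 * ∑ i : Fin k, ((k : ℝ) - ((i : ℕ) : ℝ)) * b i := by
        rw [Finset.mul_sum, Finset.mul_sum]

/-- Interleaving bound: merging two nonincreasing nonnegative sequences, some
ordering of the merged multiset has total completion time at most twice the
sum of the two separate optimal (SPT) total completion times. Positions of
the merged schedule are 0-indexed via `σ : Fin m ⊕ Fin k ≃ Fin (m + k)`,
with the job at position `i` contributing with multiplier `m + k − i`. -/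
theorem interleaving_bound (m k : ℕ) (a : Fin m → ℝ) (b : Fin k → ℝ)
    (ha0 : ∀ i, 0 ≤ a i) (hb0 : ∀ i, 0 ≤ b i)
    (ha : Antitone a) (hb : Antitone b) :
    ∃ σ : (Fin m ⊕ Fin k) ≃ Fin (m + k),
      ∑ j : Fin m ⊕ Fin k,
          (((m + k : ℕ) : ℝ) - ((σ j : ℕ) : ℝ)) * Sum.elim a b j
        ≤ 2 * ∑ i : Fin m, ((m : ℝ) - ((i : ℕ) : ℝ)) * a i
          + 2 * ∑ i : Fin k, ((k : ℝ) - ((i : ℕ) : ℝ)) * b i := by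
  rcases le_total k m with h | h
  · exact interleave_helper m k h a b ha0 hb0
  · obtain ⟨σ', hσ'⟩ := interleave_helper k m h b a hb0 ha0
    refine ⟨(Equiv.sumComm (Fin m) (Fin k)).trans (σ'.trans (finCongr (by omega))), ?_⟩
    have hsum : ∑ j : Fin m ⊕ Fin k,
        (((m + k : ℕ) : ℝ) - ((((Equiv.sumComm (Fin m) (Fin k)).trans (σ'.trans (finCongr (by omega : k + m = m + k)))) j : ℕ) : ℝ)) * Sum.elim a b j
        = ∑ j : Fin k ⊕ Fin m,
        (((k + m : ℕ) : ℝ) - ((σ' j : ℕ) : ℝ)) * Sum.elim b a j := by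
      apply Fintype.sum_equiv (Equiv.sumComm (Fin m) (Fin k))
      intro j
      cases j <;> simp [Nat.add_comm k m]
    rw [hsum]
    linarith
end

section
/- Budget violation in the hardness reduction: let u_1,…,u_n ≥ 0 with total sum U, and define B_j = 2^{n−j}(U/2 + 1) for 1 ≤ j ≤ n as above and the total budget B = ∑_{i=1}^n B_i + U/2. Then for every j, (∑_{i=1}^{j−1} B_i) + 2·B_j + u_j > B. In other words, testing both jobs of any pair j (cost 2B_j + u_j) together with the cheaper job of every earlier pair exceeds the budget. -/
/-! Since `∑_{i>j} 2^(n-i) = 2^(n-j) - 1`, the budget `B_j` exceeds the sum of all later budgets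
by exactly `U/2 + 1`; so the left-hand side exceeds the total budget by `1 + u_j > 0`. -/

open Finset

lemma sum_Icc_add_one_two_pow_sub {R : Type*} [Ring R] (j n : ℕ) :
    ∑ i ∈ Icc (j + 1) n, (2 : R) ^ (n - i) = 2 ^ (n - j) - 1 := by
  have hgeom := geom_sum_mul (2 : R) (n - j)
  rw [show (2 : R) - 1 = 1 by norm_num, mul_one] at hgeom
  rw [← Ico_add_one_right_eq_Icc, sum_Ico_eq_sum_range, Nat.add_sub_add_right,
    ← sum_range_reflect, ← hgeom]
  refine sum_congr rfl fun k hk => ?_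
  rw [mem_range] at hk
  congr 1
  omega

lemma sum_Icc_one_split_at {M : Type*} [AddCommMonoid M] (f : ℕ → M) {j n : ℕ}
    (hj : j ∈ Icc 1 n) :
    ∑ i ∈ Icc 1 n, f i = ∑ i ∈ Icc 1 (j - 1), f i + f j + ∑ i ∈ Icc (j + 1) n, f i := by
  obtain ⟨hj1, hjn⟩ := mem_Icc.mp hj
  obtain ⟨k, rfl⟩ : ∃ k, j = k + 1 := Nat.exists_eq_add_of_le' hj1
  have hIoc (m : ℕ) : Icc 1 m = Ioc 0 m := Icc_add_one_left_eq_Ioc 0 m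
  rw [Nat.add_sub_cancel, hIoc, hIoc, Icc_add_one_left_eq_Ioc,
    ← sum_Ioc_consecutive f (Nat.zero_le (k + 1)) hjn, sum_Ioc_succ_top (Nat.zero_le k)]

theorem hardness_budget_violation_general (n : ℕ) (u : ℕ → ℝ)
    (hu : ∀ i, 0 ≤ u i) (U : ℝ)
    (B : ℕ → ℝ) (hB : ∀ j, B j = 2 ^ (n - j) * (U / 2 + 1))
    (Btot : ℝ) (hBtot : Btot = (∑ i ∈ Finset.Icc 1 n, B i) + U / 2) :
    ∀ j ∈ Finset.Icc 1 n,
      (∑ i ∈ Finset.Icc 1 (j - 1), B i) + 2 * B j + u j > Btot := by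
  intro j hj
  have htail : ∑ i ∈ Icc (j + 1) n, B i = B j - (U / 2 + 1) := by
    simp only [hB, ← sum_mul, sum_Icc_add_one_two_pow_sub]
    ring
  rw [hBtot, sum_Icc_one_split_at B hj, htail]
  linarith [hu j]

/-- Budget violation in the hardness reduction: with
`B j = 2^(n−j)(U/2+1)`, `U = ∑ u i`, and total budget
`B = ∑ B i + U/2`, testing both jobs of any pair `j` together with the
cheaper job of every earlier pair exceeds the budget. -/
theorem hardness_budget_violation (n : ℕ) (u : ℕ → ℝ)
    (hu : ∀ i, 0 ≤ u i) (U : ℝ) (hU : U = ∑ i ∈ Finset.Icc 1 n, u i)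
    (B : ℕ → ℝ) (hB : ∀ j, B j = 2 ^ (n - j) * (U / 2 + 1))
    (Btot : ℝ) (hBtot : Btot = (∑ i ∈ Finset.Icc 1 n, B i) + U / 2) :
    ∀ j ∈ Finset.Icc 1 n,
      (∑ i ∈ Finset.Icc 1 (j - 1), B i) + 2 * B j + u j > Btot :=
  hardness_budget_violation_general n u hu U B hB Btot hBtot
end

section
/- Makespan (2+ε)-competitiveness via the auxiliary instance: let J be a finite job set with costs c : J → ℝ≥0, budget B, upper times p^∧ ≥ 0 and lower times p^∨ with 0 ≤ p^∨ ≤ p^∧. Suppose S ⊆ J is budget-feasible (∑_{j∈S} c(j) ≤ B) and (1+ε)-optimal for the auxiliary instance, i.e., ∑_{j∉S} p^∧(j) ≤ (1+ε) · ∑_{j∉S'} p^∧(j) for every budget-feasible S'. Then the makespan of testing S satisfies ∑_{j∈S} p^∨(j) + ∑_{j∉S} p^∧(j) ≤ (2+ε) · OPT, where OPT = min over budget-feasible S* of ∑_{j∈S*} p^∨(j) + ∑_{j∉S*} p^∧(j). -/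
/-- Makespan `(2+ε)`-competitiveness via the auxiliary instance: if `S` is
budget-feasible and `(1+ε)`-optimal for the auxiliary instance (all lower
times zero), then its makespan is at most `(2+ε)` times the optimal makespan
of every budget-feasible set `S*`. -/
theorem makespan_two_plus_eps_competitive
    {J : Type*} [Fintype J] [DecidableEq J]
    (pUp pLow c : J → ℝ) (B ε : ℝ) (hε : 0 ≤ ε)
    (hc : ∀ j, 0 ≤ c j) (hLow : ∀ j, 0 ≤ pLow j) (hle : ∀ j, pLow j ≤ pUp j)
    (S : Finset J) (hSfeas : ∑ j ∈ S, c j ≤ B)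
    (hApprox : ∀ S' : Finset J, ∑ j ∈ S', c j ≤ B →
      ∑ j ∈ Sᶜ, pUp j ≤ (1 + ε) * ∑ j ∈ S'ᶜ, pUp j) :
    ∀ Sstar : Finset J, ∑ j ∈ Sstar, c j ≤ B →
      ∑ j ∈ S, pLow j + ∑ j ∈ Sᶜ, pUp j
        ≤ (2 + ε) * (∑ j ∈ Sstar, pLow j + ∑ j ∈ Sstarᶜ, pUp j) := by
  intro Sstar hfeas
  set OPT := ∑ j ∈ Sstar, pLow j + ∑ j ∈ Sstarᶜ, pUp j with hOPT
  have h1 : ∑ j ∈ S, pLow j ≤ OPT := by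
    have hsplit : ∑ j ∈ S, pLow j
        = ∑ j ∈ S ∩ Sstar, pLow j + ∑ j ∈ S \ Sstar, pLow j :=
      (Finset.sum_inter_add_sum_sdiff S Sstar pLow).symm
    have ha : ∑ j ∈ S ∩ Sstar, pLow j ≤ ∑ j ∈ Sstar, pLow j :=
      Finset.sum_le_sum_of_subset_of_nonneg (Finset.inter_subset_right)
        (fun j _ _ => hLow j)
    have hb : ∑ j ∈ S \ Sstar, pLow j ≤ ∑ j ∈ Sstarᶜ, pUp j := by
      calc ∑ j ∈ S \ Sstar, pLow j ≤ ∑ j ∈ S \ Sstar, pUp j :=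
            Finset.sum_le_sum (fun j _ => hle j)
        _ ≤ ∑ j ∈ Sstarᶜ, pUp j :=
            Finset.sum_le_sum_of_subset_of_nonneg
              (fun j hj => by
                simp only [Finset.mem_sdiff] at hj
                simp [hj.2])
              (fun j _ _ => le_trans (hLow j) (hle j))
    rw [hsplit, hOPT]; linarith
  have h2 : ∑ j ∈ Sᶜ, pUp j ≤ (1 + ε) * OPT := by
    have := hApprox Sstar hfeas
    have hOPTnn : 0 ≤ ∑ j ∈ Sstar, pLow j :=
      Finset.sum_nonneg (fun j _ => hLow j)
    have hup : ∑ j ∈ Sstarᶜ, pUp j ≤ OPT := by rw [hOPT]; linarith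
    calc ∑ j ∈ Sᶜ, pUp j ≤ (1 + ε) * ∑ j ∈ Sstarᶜ, pUp j := this
      _ ≤ (1 + ε) * OPT := by
          apply mul_le_mul_of_nonneg_left hup; linarith
  linarith
end
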